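/- arXiv:2409.09187 — 3 statements merged into one kernel-verified Lean document; each statement's English description precedes it below -/
import Mathlib

section
/- Let A be an m×n real matrix with singular values σ₁ ≥ … ≥ σ_n and let Ṽ ∈ ℝ^{n×r} be orthonormal with orthogonal completion Q₂ = [Ṽ, Ṽ⊥]. Set Ã = AQ₂ and let Ã₂ denote its m×(n−r) right block, E_SVD = [0, Ã₂]. Let σ_i^SVD = σ_i(AṼ) for i = 1,…,r be the one-sided projected SVD approximations of the singular values. For each i define τ_i^SVD = 2‖Ã₂‖₂ / (σ_i − 2‖E_SVD‖₂). Then for every i ∈ {1,…,r} with τ_i^SVD > 0, |σ_i − σ_i^SVD| ≤ 4‖Ã₂‖₂² / (σ_i − 2‖E_SVD‖₂). -/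
/-!
By Courant–Fischer, `σᵢ(M)²` is the largest `c` such that `‖Mx‖² ≥ c‖x‖²` on some subspace of
dimension `i + 1`. Composing with the isometry `Ṽ` gives `σᵢ(AṼ) ≤ σᵢ(A)`. Conversely, if
`‖Ax‖² ≥ σ²‖x‖²` on `S`, then `‖Aᵀu‖² ≥ σ²‖u‖²` on `A S`; as `ṼṼᵀ + Ṽ⊥Ṽ⊥ᵀ = 1` and
`Ã₂ = AṼ⊥`, this gives `‖(AṼ)ᵀu‖² ≥ (σ² - ‖Ã₂‖²)‖u‖²` there, and passing back through `(AṼ)ᵀ`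
yields `σᵢ(A)² ≤ σᵢ(AṼ)² + ‖Ã₂‖²`. Hence `0 ≤ σᵢ - σᵢ^SVD ≤ ‖Ã₂‖² / (σᵢ + σᵢ^SVD)`, and
`σᵢ + σᵢ^SVD ≥ σᵢ - 2‖E_SVD‖ > 0` when `τᵢ > 0`.
-/

open Matrix

/-- The tuple `f` sorted in nonincreasing order. -/
noncomputable def sortedDesc {α : Type*} [Fintype α] (f : α → ℝ) :
    Fin (Fintype.card α) → ℝ := fun i =>
  let g : Fin (Fintype.card α) → ℝ := f ∘ (Fintype.equivFin α).symm
  g (Tuple.sort g i.rev)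

/-- Singular values of a real matrix, in nonincreasing order (generic index types). -/
noncomputable def sVals {m n : Type*} [Fintype m] [Fintype n] [DecidableEq n]
    (M : Matrix m n ℝ) : Fin (Fintype.card n) → ℝ :=
  sortedDesc fun j => Real.sqrt ((show (Mᵀ * M).IsHermitian by
    simpa using Matrix.isHermitian_conjTranspose_mul_self M).eigenvalues j)

/-- Singular values of a real `Fin m × Fin n` matrix, in nonincreasing order,
`singularValues M 0` being the largest. -/
noncomputable def singularValues {m n : ℕ} (M : Matrix (Fin m) (Fin n) ℝ) :
    Fin n → ℝ := fun i =>
  let g : Fin n → ℝ := fun j =>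
    Real.sqrt ((show (Mᵀ * M).IsHermitian by
      simpa using Matrix.isHermitian_conjTranspose_mul_self M).eigenvalues j)
  g (Tuple.sort g i.rev)

/-- The spectral (operator 2-)norm of a real matrix. -/
noncomputable def specNorm {m n : Type*} [Fintype m] [Fintype n] [DecidableEq n]
    (M : Matrix m n ℝ) : ℝ :=
  ‖LinearMap.toContinuousLinearMap (Matrix.toEuclideanLin M)‖

/-- The Moore-Penrose pseudoinverse of a real matrix, defined via the Tikhonov
regularization limit of `(AᵀA + εI)⁻¹Aᵀ` as `ε` tends to `0` from above. -/
noncomputable def pinv {m n : Type*} [Fintype m] [Fintype n] [DecidableEq n]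
    (A : Matrix m n ℝ) : Matrix n m ℝ :=
  Filter.limUnder (nhdsWithin 0 (Set.Ioi 0)) fun ε : ℝ => (Aᵀ * A + ε • 1)⁻¹ * Aᵀ

open Module Submodule
open scoped RealInnerProductSpace Matrix.Norms.L2Operator

theorem Submodule.finrank_map_of_forall_mul_norm_sq_le {E F : Type*}
    [NormedAddCommGroup E] [NormedSpace ℝ E] [NormedAddCommGroup F] [NormedSpace ℝ F]
    {f : E →ₗ[ℝ] F} {S : Submodule ℝ E} {c : ℝ} (hc : 0 < c)
    (hf : ∀ x ∈ S, c * ‖x‖ ^ 2 ≤ ‖f x‖ ^ 2) :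
    finrank ℝ (S.map f) = finrank ℝ S := by
  have hdisj : Disjoint S (LinearMap.ker f) := by
    refine Submodule.disjoint_def.mpr fun x hxS hxker => ?_
    have := hf x hxS
    rw [LinearMap.mem_ker.mp hxker, norm_zero] at this
    have : ‖x‖ ^ 2 ≤ 0 := by nlinarith
    simpa using this
  rw [← LinearMap.range_domRestrict]
  exact LinearMap.finrank_range_of_inj (LinearMap.injective_domRestrict_iff.mpr hdisj)

namespace OrthonormalBasis

variable {ι E : Type*} [Fintype ι] [NormedAddCommGroup E] [InnerProductSpace ℝ E]

theorem finrank_span_image (b : OrthonormalBasis ι ℝ E) (F : Finset ι) :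
    finrank ℝ (span ℝ (b '' F)) = F.card := by
  rw [Set.image_eq_range]
  simpa [Function.comp_def] using finrank_span_eq_card
    (b.orthonormal.linearIndependent.comp ((↑) : F → ι) Subtype.val_injective)

theorem inner_eq_zero_of_mem_span_image (b : OrthonormalBasis ι ℝ E) {F : Finset ι} {j : ι}
    (hj : j ∉ F) {x : E} (hx : x ∈ span ℝ (b '' F)) : ⟪b j, x⟫ = 0 := by
  classical
  refine (span_le (p := LinearMap.ker (innerₛₗ ℝ (b j)))).mpr ?_ hx
  rintro _ ⟨k, hk, rfl⟩
  simp [b.inner_eq_ite, show j ≠ k by rintro rfl; exact hj hk]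

theorem inner_map_self_eq_sum (b : OrthonormalBasis ι ℝ E) {T : E →ₗ[ℝ] E} {μ : ι → ℝ}
    (hT : ∀ j, T (b j) = μ j • b j) (x : E) :
    ⟪x, T x⟫ = ∑ j, μ j * ⟪b j, x⟫ ^ 2 := by
  have hTx : T x = ∑ j, (μ j * ⟪b j, x⟫) • b j := by
    conv_lhs => rw [← b.sum_repr' x]
    simp only [map_sum, map_smul, hT, smul_smul, mul_comm]
  simp only [hTx, inner_sum, inner_smul_right, real_inner_comm x]
  exact Finset.sum_congr rfl fun j _ => by ring

theorem mul_norm_sq_le_inner_map_self (b : OrthonormalBasis ι ℝ E) {T : E →ₗ[ℝ] E} {μ : ι → ℝ}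
    (hT : ∀ j, T (b j) = μ j • b j) {F : Finset ι} {c : ℝ} (hc : ∀ j ∈ F, c ≤ μ j) {x : E}
    (hx : x ∈ span ℝ (b '' F)) : c * ‖x‖ ^ 2 ≤ ⟪x, T x⟫ := by
  rw [b.inner_map_self_eq_sum hT, ← b.sum_sq_inner_right, Finset.mul_sum]
  refine Finset.sum_le_sum fun j _ => ?_
  by_cases hj : j ∈ F
  · exact mul_le_mul_of_nonneg_right (hc j hj) (sq_nonneg _)
  · simp [b.inner_eq_zero_of_mem_span_image hj hx]

theorem inner_map_self_le_mul_norm_sq (b : OrthonormalBasis ι ℝ E) {T : E →ₗ[ℝ] E} {μ : ι → ℝ}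
    (hT : ∀ j, T (b j) = μ j • b j) {F : Finset ι} {c : ℝ} (hc : ∀ j ∈ F, μ j ≤ c) {x : E}
    (hx : x ∈ span ℝ (b '' F)) : ⟪x, T x⟫ ≤ c * ‖x‖ ^ 2 := by
  rw [b.inner_map_self_eq_sum hT, ← b.sum_sq_inner_right, Finset.mul_sum]
  refine Finset.sum_le_sum fun j _ => ?_
  by_cases hj : j ∈ F
  · exact mul_le_mul_of_nonneg_right (hc j hj) (sq_nonneg _)
  · simp [b.inner_eq_zero_of_mem_span_image hj hx]

end OrthonormalBasis

namespace Tuple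

variable {α : Type*} [LinearOrder α] {N : ℕ}

theorem exists_card_eq_forall_sort_rev_le (g : Fin N → α) (i : Fin N) :
    ∃ F : Finset (Fin N), F.card = i + 1 ∧ ∀ j ∈ F, g (sort g i.rev) ≤ g j := by
  refine ⟨(Finset.Ici i.rev).image (sort g), ?_, ?_⟩
  · rw [Finset.card_image_of_injective _ (sort g).injective, Fin.card_Ici, Fin.val_rev]
    omega
  · simp only [Finset.mem_image, Finset.mem_Ici]
    rintro _ ⟨k, hk, rfl⟩
    exact monotone_sort g hk

theorem exists_card_eq_forall_le_sort_rev (g : Fin N → α) (i : Fin N) :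
    ∃ F : Finset (Fin N), F.card = N - i ∧ ∀ j ∈ F, g j ≤ g (sort g i.rev) := by
  refine ⟨(Finset.Iic i.rev).image (sort g), ?_, ?_⟩
  · rw [Finset.card_image_of_injective _ (sort g).injective, Fin.card_Iic, Fin.val_rev]
    omega
  · simp only [Finset.mem_image, Finset.mem_Iic]
    rintro _ ⟨k, hk, rfl⟩
    exact monotone_sort g hk

end Tuple

theorem Matrix.IsHermitian.toEuclideanLin_eigenvectorBasis {𝕜 n : Type*} [RCLike 𝕜] [Fintype n]
    [DecidableEq n] {A : Matrix n n 𝕜} (hA : A.IsHermitian) (j : n) :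
    A.toEuclideanLin (hA.eigenvectorBasis j) = hA.eigenvalues j • hA.eigenvectorBasis j := by
  rw [Matrix.toLpLin_apply, hA.mulVec_eigenvectorBasis]
  rfl

namespace Matrix

theorem norm_toEuclideanLin_le {m n : Type*} [Fintype m] [Fintype n] [DecidableEq n]
    (M : Matrix m n ℝ) (x : EuclideanSpace ℝ n) : ‖M.toEuclideanLin x‖ ≤ specNorm M * ‖x‖ :=
  (LinearMap.toContinuousLinearMap M.toEuclideanLin).le_opNorm x

theorem isHermitian_transpose_mul_self {m n : Type*} [Fintype m] (M : Matrix m n ℝ) :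
    (Mᵀ * M).IsHermitian := by
  simpa using isHermitian_conjTranspose_mul_self M

theorem eigenvalues_transpose_mul_self_nonneg {m n : Type*} [Fintype m] [Fintype n]
    [DecidableEq n] (M : Matrix m n ℝ) (j : n) :
    0 ≤ M.isHermitian_transpose_mul_self.eigenvalues j :=
  (posSemidef_conjTranspose_mul_self M).eigenvalues_nonneg j

theorem specNorm_nonneg {m n : Type*} [Fintype m] [Fintype n] [DecidableEq n]
    (M : Matrix m n ℝ) : 0 ≤ specNorm M :=
  norm_nonneg _

section Euclidean

variable {l m n : Type*} [Fintype l] [Fintype m] [Fintype n] [DecidableEq l] [DecidableEq m]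
  [DecidableEq n]

theorem inner_toEuclideanLin_transpose (M : Matrix m n ℝ) (x : EuclideanSpace ℝ n)
    (y : EuclideanSpace ℝ m) : ⟪x, Mᵀ.toEuclideanLin y⟫ = ⟪M.toEuclideanLin x, y⟫ := by
  rw [← conjTranspose_eq_transpose_of_trivial, toEuclideanLin_conjTranspose_eq_adjoint,
    LinearMap.adjoint_inner_right]

theorem norm_toEuclideanLin_sq (M : Matrix m n ℝ) (x : EuclideanSpace ℝ n) :
    ‖M.toEuclideanLin x‖ ^ 2 = ⟪x, (Mᵀ * M).toEuclideanLin x⟫ := by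
  rw [toLpLin_mul_same, LinearMap.comp_apply, inner_toEuclideanLin_transpose,
    real_inner_self_eq_norm_sq]

theorem norm_toEuclideanLin_of_transpose_mul_self_eq_one {V : Matrix n l ℝ} (hV : Vᵀ * V = 1)
    (x : EuclideanSpace ℝ l) : ‖V.toEuclideanLin x‖ = ‖x‖ := by
  have h := V.norm_toEuclideanLin_sq x
  rw [hV, toLpLin_one, LinearMap.id_apply, real_inner_self_eq_norm_sq] at h
  exact (pow_left_inj₀ (norm_nonneg _) (norm_nonneg _) two_ne_zero).mp h

theorem norm_toEuclideanLin_transpose_sq_add_sq {V : Matrix n l ℝ} {W : Matrix n m ℝ}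
    (h : V * Vᵀ + W * Wᵀ = 1) (w : EuclideanSpace ℝ n) :
    ‖Vᵀ.toEuclideanLin w‖ ^ 2 + ‖Wᵀ.toEuclideanLin w‖ ^ 2 = ‖w‖ ^ 2 := by
  rw [norm_toEuclideanLin_sq, norm_toEuclideanLin_sq, transpose_transpose, transpose_transpose,
    ← inner_add_right, ← LinearMap.add_apply, ← map_add, h, toLpLin_one, LinearMap.id_apply,
    real_inner_self_eq_norm_sq]

theorem specNorm_transpose (M : Matrix m n ℝ) : specNorm Mᵀ = specNorm M :=
  l2_opNorm_conjTranspose M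

theorem le_norm_toEuclideanLin_transpose_sq_of_mem_map (M : Matrix m n ℝ)
    {S : Submodule ℝ (EuclideanSpace ℝ n)} {c : ℝ}
    (hM : ∀ x ∈ S, c * ‖x‖ ^ 2 ≤ ‖M.toEuclideanLin x‖ ^ 2) :
    ∀ u ∈ S.map M.toEuclideanLin, c * ‖u‖ ^ 2 ≤ ‖Mᵀ.toEuclideanLin u‖ ^ 2 := by
  rintro _ ⟨x, hx, rfl⟩
  set y := M.toEuclideanLin x
  rcases eq_or_ne x 0 with rfl | hx0
  · simp [y]
  have hCS : ‖y‖ ^ 2 ≤ ‖x‖ * ‖Mᵀ.toEuclideanLin y‖ := by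
    rw [norm_toEuclideanLin_sq, toLpLin_mul_same, LinearMap.comp_apply]
    exact real_inner_le_norm _ _
  refine le_of_mul_le_mul_left ?_ (pow_pos (norm_pos_iff.mpr hx0) 2)
  calc ‖x‖ ^ 2 * (c * ‖y‖ ^ 2) = (c * ‖x‖ ^ 2) * ‖y‖ ^ 2 := by ring
    _ ≤ (‖y‖ ^ 2) ^ 2 := by rw [sq (‖y‖ ^ 2)]; gcongr; exact hM x hx
    _ ≤ (‖x‖ * ‖Mᵀ.toEuclideanLin y‖) ^ 2 := by gcongr
    _ = ‖x‖ ^ 2 * ‖Mᵀ.toEuclideanLin y‖ ^ 2 := by ring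

end Euclidean

section SingularValues

variable {p q : ℕ}

theorem singularValues_nonneg (M : Matrix (Fin p) (Fin q) ℝ) (i : Fin q) :
    0 ≤ singularValues M i :=
  Real.sqrt_nonneg _

theorem exists_finrank_eq_forall_sq_singularValues_mul_le (M : Matrix (Fin p) (Fin q) ℝ)
    (i : Fin q) : ∃ S : Submodule ℝ (EuclideanSpace ℝ (Fin q)), finrank ℝ S = i + 1 ∧
      ∀ x ∈ S, singularValues M i ^ 2 * ‖x‖ ^ 2 ≤ ‖M.toEuclideanLin x‖ ^ 2 := by
  set hM := M.isHermitian_transpose_mul_self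
  set g : Fin q → ℝ := fun j => √(hM.eigenvalues j)
  obtain ⟨F, hcard, hF⟩ := Tuple.exists_card_eq_forall_sort_rev_le g i
  refine ⟨span ℝ (hM.eigenvectorBasis '' F), by rw [OrthonormalBasis.finrank_span_image, hcard],
    fun x hx => ?_⟩
  rw [norm_toEuclideanLin_sq]
  refine hM.eigenvectorBasis.mul_norm_sq_le_inner_map_self hM.toEuclideanLin_eigenvectorBasis
    (fun j hj => ?_) hx
  calc singularValues M i ^ 2 = g (Tuple.sort g i.rev) ^ 2 := rfl
    _ ≤ g j ^ 2 := pow_le_pow_left₀ (Real.sqrt_nonneg _) (hF j hj) 2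
    _ = hM.eigenvalues j := Real.sq_sqrt (M.eigenvalues_transpose_mul_self_nonneg j)

theorem exists_finrank_eq_forall_le_sq_singularValues_mul (M : Matrix (Fin p) (Fin q) ℝ)
    (i : Fin q) : ∃ S : Submodule ℝ (EuclideanSpace ℝ (Fin q)), finrank ℝ S = q - i ∧
      ∀ x ∈ S, ‖M.toEuclideanLin x‖ ^ 2 ≤ singularValues M i ^ 2 * ‖x‖ ^ 2 := by
  set hM := M.isHermitian_transpose_mul_self
  set g : Fin q → ℝ := fun j => √(hM.eigenvalues j)
  obtain ⟨F, hcard, hF⟩ := Tuple.exists_card_eq_forall_le_sort_rev g i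
  refine ⟨span ℝ (hM.eigenvectorBasis '' F), by rw [OrthonormalBasis.finrank_span_image, hcard],
    fun x hx => ?_⟩
  rw [norm_toEuclideanLin_sq]
  refine hM.eigenvectorBasis.inner_map_self_le_mul_norm_sq hM.toEuclideanLin_eigenvectorBasis
    (fun j hj => ?_) hx
  calc hM.eigenvalues j = g j ^ 2 := (Real.sq_sqrt (M.eigenvalues_transpose_mul_self_nonneg j)).symm
    _ ≤ g (Tuple.sort g i.rev) ^ 2 := pow_le_pow_left₀ (Real.sqrt_nonneg _) (hF j hj) 2
    _ = singularValues M i ^ 2 := rfl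

theorem le_sq_singularValues_iff (M : Matrix (Fin p) (Fin q) ℝ) (i : Fin q) (c : ℝ) :
    c ≤ singularValues M i ^ 2 ↔ ∃ S : Submodule ℝ (EuclideanSpace ℝ (Fin q)),
      i + 1 ≤ finrank ℝ S ∧ ∀ x ∈ S, c * ‖x‖ ^ 2 ≤ ‖M.toEuclideanLin x‖ ^ 2 := by
  constructor
  · intro hc
    obtain ⟨S, hS, hSM⟩ := M.exists_finrank_eq_forall_sq_singularValues_mul_le i
    exact ⟨S, hS.ge, fun x hx => (mul_le_mul_of_nonneg_right hc (sq_nonneg _)).trans (hSM x hx)⟩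
  · rintro ⟨S, hS, hSM⟩
    obtain ⟨T, hT, hTM⟩ := M.exists_finrank_eq_forall_le_sq_singularValues_mul i
    have hST : S ⊓ T ≠ ⊥ := by
      intro hbot
      have hsum := Submodule.finrank_sup_add_finrank_inf_eq S T
      have hle := (S ⊔ T).finrank_le
      rw [hbot, finrank_bot, hT] at hsum
      rw [finrank_euclideanSpace_fin] at hle
      omega
    obtain ⟨x, ⟨hxS, hxT⟩, hx0⟩ := Submodule.exists_mem_ne_zero_of_ne_bot hST
    refine le_of_mul_le_mul_right ?_ (pow_pos (norm_pos_iff.mpr hx0) 2)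
    exact (hSM x hxS).trans (hTM x hxT)

end SingularValues

section Compression

variable {m n r : ℕ}

theorem sq_singularValues_mul_le (hrn : r ≤ n) (A : Matrix (Fin m) (Fin n) ℝ)
    {V : Matrix (Fin n) (Fin r) ℝ} (hV : Vᵀ * V = 1) (i : Fin r) :
    singularValues (A * V) i ^ 2 ≤ singularValues A (Fin.castLE hrn i) ^ 2 := by
  obtain ⟨S, hS, hSAV⟩ := ((A * V).le_sq_singularValues_iff i _).mp le_rfl
  have hVS : ∀ x ∈ S, 1 * ‖x‖ ^ 2 ≤ ‖V.toEuclideanLin x‖ ^ 2 := fun x _ => by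
    rw [norm_toEuclideanLin_of_transpose_mul_self_eq_one hV, one_mul]
  refine (A.le_sq_singularValues_iff _ _).mpr ⟨S.map V.toEuclideanLin, ?_, ?_⟩
  · rwa [Fin.val_castLE, Submodule.finrank_map_of_forall_mul_norm_sq_le one_pos hVS]
  · rintro _ ⟨x, hx, rfl⟩
    rw [norm_toEuclideanLin_of_transpose_mul_self_eq_one hV, ← LinearMap.comp_apply,
      ← toLpLin_mul_same]
    exact hSAV x hx

theorem sq_singularValues_le_sq_singularValues_mul_add {κ : Type*} [Fintype κ] [DecidableEq κ]
    (hrn : r ≤ n) (A : Matrix (Fin m) (Fin n) ℝ) {V : Matrix (Fin n) (Fin r) ℝ}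
    {W : Matrix (Fin n) κ ℝ} (hVW : V * Vᵀ + W * Wᵀ = 1) (i : Fin r) :
    singularValues A (Fin.castLE hrn i) ^ 2 ≤
      singularValues (A * V) i ^ 2 + specNorm (A * W) ^ 2 := by
  set σ := singularValues A (Fin.castLE hrn i)
  set β := specNorm (A * W)
  rcases le_or_gt (σ ^ 2) (β ^ 2) with hσβ | hσβ
  · linarith [sq_nonneg (singularValues (A * V) i)]
  obtain ⟨S, hS, hSA⟩ := (A.le_sq_singularValues_iff _ _).mp le_rfl
  set S' := S.map A.toEuclideanLin
  have hS'A : ∀ u ∈ S', σ ^ 2 * ‖u‖ ^ 2 ≤ ‖Aᵀ.toEuclideanLin u‖ ^ 2 :=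
    A.le_norm_toEuclideanLin_transpose_sq_of_mem_map hSA
  have hS'AV : ∀ u ∈ S', (σ ^ 2 - β ^ 2) * ‖u‖ ^ 2 ≤ ‖(A * V)ᵀ.toEuclideanLin u‖ ^ 2 := by
    intro u hu
    have hsplit := norm_toEuclideanLin_transpose_sq_add_sq hVW (Aᵀ.toEuclideanLin u)
    have hW : ‖(A * W)ᵀ.toEuclideanLin u‖ ≤ β * ‖u‖ := by
      simpa only [specNorm_transpose] using (A * W)ᵀ.norm_toEuclideanLin_le u
    have hW' : ‖(A * W)ᵀ.toEuclideanLin u‖ ^ 2 ≤ β ^ 2 * ‖u‖ ^ 2 := by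
      rw [← mul_pow]; gcongr
    simp only [transpose_mul, toLpLin_mul_same, LinearMap.comp_apply] at hW' ⊢
    linarith [hS'A u hu]
  have hσ : 0 < σ ^ 2 := (sq_nonneg β).trans_lt hσβ
  rw [← sub_le_iff_le_add]
  refine ((A * V).le_sq_singularValues_iff i _).mpr ⟨S'.map (A * V)ᵀ.toEuclideanLin, ?_, ?_⟩
  · rwa [Submodule.finrank_map_of_forall_mul_norm_sq_le (sub_pos.mpr hσβ) hS'AV,
      Submodule.finrank_map_of_forall_mul_norm_sq_le hσ hSA]
  · simpa only [transpose_transpose] using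
      (A * V)ᵀ.le_norm_toEuclideanLin_transpose_sq_of_mem_map hS'AV

end Compression

end Matrix

theorem abs_sub_le_div_of_sq_le_sq_add_sq {σ s β d : ℝ} (hs : 0 ≤ s) (hd : 0 < d) (hdσ : d ≤ σ)
    (h₁ : s ^ 2 ≤ σ ^ 2) (h₂ : σ ^ 2 ≤ s ^ 2 + β ^ 2) : |σ - s| ≤ β ^ 2 / d := by
  have hsσ : s ≤ σ := (pow_le_pow_iff_left₀ hs (hd.le.trans hdσ) two_ne_zero).mp h₁
  rw [abs_of_nonneg (sub_nonneg.mpr hsσ), le_div_iff₀ hd]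
  calc (σ - s) * d ≤ (σ - s) * (σ + s) := by gcongr; linarith
    _ = σ ^ 2 - s ^ 2 := by ring
    _ ≤ β ^ 2 := by linarith

theorem svd_approximation_singular_value_bound_general
    (m n r : ℕ) (hrn : r ≤ n)
    (A : Matrix (Fin m) (Fin n) ℝ)
    (tV : Matrix (Fin n) (Fin r) ℝ)
    (tVperp : Matrix (Fin n) (Fin (n - r)) ℝ)
    (hV : tVᵀ * tV = 1)
    (Q₂ : Matrix (Fin n) (Fin r ⊕ Fin (n - r)) ℝ)
    (hQ₂ : Q₂ = Matrix.fromCols tV tVperp)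
    (hQ₂o' : Q₂ * Q₂ᵀ = 1)
    (Atil : Matrix (Fin m) (Fin r ⊕ Fin (n - r)) ℝ)
    (hAtil : Atil = A * Q₂)
    (Atil₂ : Matrix (Fin m) (Fin (n - r)) ℝ) (hAtil₂ : Atil₂ = Atil.toCols₂)
    (ESVD : Matrix (Fin m) (Fin r ⊕ Fin (n - r)) ℝ)
    (σSVD : Fin r → ℝ) (hσSVD : σSVD = singularValues (A * tV))
    (τ : Fin r → ℝ)
    (hτ : ∀ i, τ i = 2 * specNorm Atil₂ /
      (singularValues A (Fin.castLE hrn i) - 2 * specNorm ESVD)) :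
    ∀ i, 0 < τ i →
      |singularValues A (Fin.castLE hrn i) - σSVD i| ≤
        4 * specNorm Atil₂ ^ 2 /
          (singularValues A (Fin.castLE hrn i) - 2 * specNorm ESVD) := by
  intro i hτi
  set σ := singularValues A (Fin.castLE hrn i)
  have hgap : 0 < σ - 2 * specNorm ESVD := by
    rw [hτ i] at hτi
    exact lt_of_not_ge fun h => hτi.not_ge <|
      div_nonpos_of_nonneg_of_nonpos (mul_nonneg zero_le_two Atil₂.specNorm_nonneg) h
  have hA₂ : Atil₂ = A * tVperp := by
    rw [hAtil₂, hAtil, hQ₂, Matrix.mul_fromCols, Matrix.toCols₂_fromCols]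
  have hVW : tV * tVᵀ + tVperp * tVperpᵀ = 1 := by
    rwa [hQ₂, Matrix.transpose_fromCols, Matrix.fromCols_mul_fromRows] at hQ₂o'
  have h₁ := A.sq_singularValues_mul_le hrn hV i
  have h₂ := A.sq_singularValues_le_sq_singularValues_mul_add hrn hVW i
  rw [← hA₂] at h₂
  rw [hσSVD]
  calc |σ - singularValues (A * tV) i| ≤ specNorm Atil₂ ^ 2 / (σ - 2 * specNorm ESVD) :=
        abs_sub_le_div_of_sq_le_sq_add_sq ((A * tV).singularValues_nonneg i) hgap
          (by linarith [ESVD.specNorm_nonneg]) h₁ h₂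
    _ ≤ 4 * specNorm Atil₂ ^ 2 / (σ - 2 * specNorm ESVD) := by
        gcongr; linarith [sq_nonneg (specNorm Atil₂)]

/-- Accuracy of the singular values extracted by the one-sided projected SVD
approximation, `σ_i^SVD = σ_i(AṼ)`:
`|σ_i − σ_i^SVD| ≤ 4‖Ã₂‖₂² / (σ_i − 2‖E_SVD‖₂)` whenever `τ_i^SVD > 0`. -/
theorem svd_approximation_singular_value_bound
    (m n r : ℕ) (hrn : r ≤ n)
    (A : Matrix (Fin m) (Fin n) ℝ)
    (tV : Matrix (Fin n) (Fin r) ℝ)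
    (tVperp : Matrix (Fin n) (Fin (n - r)) ℝ)
    (hV : tVᵀ * tV = 1)
    (Q₂ : Matrix (Fin n) (Fin r ⊕ Fin (n - r)) ℝ)
    (hQ₂ : Q₂ = Matrix.fromCols tV tVperp)
    (hQ₂o : Q₂ᵀ * Q₂ = 1) (hQ₂o' : Q₂ * Q₂ᵀ = 1)
    (Atil : Matrix (Fin m) (Fin r ⊕ Fin (n - r)) ℝ)
    (hAtil : Atil = A * Q₂)
    (Atil₂ : Matrix (Fin m) (Fin (n - r)) ℝ) (hAtil₂ : Atil₂ = Atil.toCols₂)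
    (ESVD : Matrix (Fin m) (Fin r ⊕ Fin (n - r)) ℝ)
    (hESVD : ESVD = Matrix.fromCols 0 Atil₂)
    (σSVD : Fin r → ℝ) (hσSVD : σSVD = singularValues (A * tV))
    (τ : Fin r → ℝ)
    (hτ : ∀ i, τ i = 2 * specNorm Atil₂ /
      (singularValues A (Fin.castLE hrn i) - 2 * specNorm ESVD)) :
    ∀ i, 0 < τ i →
      |singularValues A (Fin.castLE hrn i) - σSVD i| ≤
        4 * specNorm Atil₂ ^ 2 /
          (singularValues A (Fin.castLE hrn i) - 2 * specNorm ESVD) :=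
  svd_approximation_singular_value_bound_general m n r hrn A tV tVperp hV Q₂ hQ₂ hQ₂o' Atil hAtil
    Atil₂ hAtil₂ ESVD σSVD hσSVD τ hτ
end

section
/- Let Ā be an m×n real matrix partitioned into blocks Ā₁₁ ((r+ℓ)×r), Ā₁₂ ((r+ℓ)×(n−r)), Ā₂₁ ((m−r−ℓ)×r), Ā₂₂ ((m−r−ℓ)×(n−r)), and assume rank(Ā₁₁) = r. Then the generalized Nyström approximation of Ā with sketch matrices X = [I_r; 0] ∈ ℝ^{n×r} and Y = [I_{r+ℓ}; 0] ∈ ℝ^{m×(r+ℓ)}, namely ĀX(Y*ĀX)†Y*Ā, equals the block matrix [[Ā₁₁, Ā₁₁Ā₁₁†Ā₁₂],[Ā₂₁, Ā₂₁Ā₁₁†Ā₁₂]]. -/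
/-
Since `Ā₁₁` has full column rank, `Ā₁₁ᵀ Ā₁₁` is invertible, so the Tikhonov limit defining the
pseudoinverse is the value at `ε = 0` of a continuous function: `Ā₁₁† = (Ā₁₁ᵀ Ā₁₁)⁻¹ Ā₁₁ᵀ`, and
hence `Ā₁₁† Ā₁₁ = I`. The sketches only select blocks: `ĀX = [Ā₁₁; Ā₂₁]`, `YᵀĀ = [Ā₁₁ Ā₁₂]` and
`YᵀĀX = Ā₁₁`. Multiplying out `[Ā₁₁; Ā₂₁] Ā₁₁† [Ā₁₁ Ā₁₂]` and cancelling `Ā₁₁† Ā₁₁` gives the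
claimed block matrix.
-/

open Matrix

theorem Matrix.isUnit_of_rank_eq_card {n R : Type*} [Fintype n] [DecidableEq n] [Field R]
    {B : Matrix n n R} (h : B.rank = Fintype.card n) : IsUnit B := by
  have hrange : LinearMap.range B.mulVecLin = ⊤ :=
    Submodule.eq_top_of_finrank_eq (by rw [← rank, h, Module.finrank_fintype_fun_eq_card])
  exact mulVec_surjective_iff_isUnit.mp (LinearMap.range_eq_top.mp hrange)

theorem pinv_eq_of_isUnit_transpose_mul_self {m n : Type*} [Fintype m] [Fintype n]
    [DecidableEq n]
    {A : Matrix m n ℝ} (h : IsUnit (Aᵀ * A)) : pinv A = (Aᵀ * A)⁻¹ * Aᵀ := by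
  have hinv : ContinuousAt Inv.inv (Aᵀ * A + (0 : ℝ) • 1) := by
    refine continuousAt_matrix_inv _ ?_
    simpa [Ring.inverse_eq_inv'] using
      continuousAt_inv₀ ((isUnit_iff_isUnit_det _).mp h).ne_zero
  have hcont : ContinuousAt (fun ε : ℝ => (Aᵀ * A + ε • 1)⁻¹ * Aᵀ) 0 :=
    (continuous_id.matrix_mul continuous_const).continuousAt.comp
      (hinv.comp (f := fun ε : ℝ => Aᵀ * A + ε • (1 : Matrix n n ℝ)) (by fun_prop))
  rw [pinv]
  simpa using (hcont.tendsto.mono_left nhdsWithin_le_nhds).limUnder_eq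

theorem pinv_mul_self_of_rank_eq_card {m n : Type*} [Fintype m] [Fintype n] [DecidableEq n]
    {A : Matrix m n ℝ} (h : A.rank = Fintype.card n) : pinv A * A = 1 := by
  have hu : IsUnit (Aᵀ * A) := isUnit_of_rank_eq_card (by rw [rank_transpose_mul_self, h])
  rw [pinv_eq_of_isUnit_transpose_mul_self hu, Matrix.mul_assoc,
    nonsing_inv_mul _ ((isUnit_iff_isUnit_det _).mp hu)]

section Blocks

variable {m₁ m₂ n₁ n₂ R : Type*} [Semiring R]

-- Both blocks of `fromRows 1 0` are ascribed: otherwise the product elaborates with the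
-- `CStarMatrix` multiplication instance and no longer matches the `Matrix` lemmas.
theorem fromBlocks_mul_fromRows_one_zero [Fintype n₁] [Fintype n₂] [DecidableEq n₁]
    (A₁₁ : Matrix m₁ n₁ R) (A₁₂ : Matrix m₁ n₂ R) (A₂₁ : Matrix m₂ n₁ R) (A₂₂ : Matrix m₂ n₂ R) :
    fromBlocks A₁₁ A₁₂ A₂₁ A₂₂ * fromRows (1 : Matrix n₁ n₁ R) (0 : Matrix n₂ n₁ R) =
      fromRows A₁₁ A₂₁ := by
  simp [fromBlocks_mul_fromRows]

theorem transpose_fromRows_one_zero_mul_fromBlocks [Fintype m₁] [Fintype m₂] [DecidableEq m₁]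
    (A₁₁ : Matrix m₁ n₁ R) (A₁₂ : Matrix m₁ n₂ R) (A₂₁ : Matrix m₂ n₁ R) (A₂₂ : Matrix m₂ n₂ R) :
    (fromRows (1 : Matrix m₁ m₁ R) (0 : Matrix m₂ m₁ R))ᵀ * fromBlocks A₁₁ A₁₂ A₂₁ A₂₂ =
      fromCols A₁₁ A₁₂ := by
  simp [transpose_fromRows, fromCols_mul_fromBlocks]

theorem fromCols_mul_fromRows_one_zero [Fintype n₁] [Fintype n₂] [DecidableEq n₁]
    (A₁₁ : Matrix m₁ n₁ R) (A₁₂ : Matrix m₁ n₂ R) :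
    fromCols A₁₁ A₁₂ * fromRows (1 : Matrix n₁ n₁ R) (0 : Matrix n₂ n₁ R) = A₁₁ := by
  simp [fromCols_mul_fromRows]

theorem fromRows_mul_mul_fromCols_of_mul_eq_one {k : Type*} [Fintype k] [DecidableEq k]
    [Fintype m₁]
    (A₁₁ : Matrix m₁ k R) (A₁₂ : Matrix m₁ n₂ R) (A₂₁ : Matrix m₂ k R) {P : Matrix k m₁ R}
    (hP : P * A₁₁ = 1) :
    fromRows A₁₁ A₂₁ * P * fromCols A₁₁ A₁₂ =
      fromBlocks A₁₁ (A₁₁ * P * A₁₂) A₂₁ (A₂₁ * P * A₁₂) := by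
  rw [fromRows_mul, fromRows_mul_fromCols, Matrix.mul_assoc A₁₁, Matrix.mul_assoc A₂₁, hP,
    Matrix.mul_one, Matrix.mul_one]

end Blocks

/-- **Equation (3.3)**: the generalized Nyström approximation of a block matrix
`Ā = [[Ā₁₁, Ā₁₂], [Ā₂₁, Ā₂₂]]` with sketch matrices `X = [I_r; 0]` and
`Y = [I_{r+ℓ}; 0]`, when `rank(Ā₁₁) = r`, equals
`[[Ā₁₁, Ā₁₁Ā₁₁†Ā₁₂], [Ā₂₁, Ā₂₁Ā₁₁†Ā₁₂]]`. -/
theorem generalized_nystrom_of_block_matrix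
    (m n r ℓ : ℕ)
    (A₁₁ : Matrix (Fin (r + ℓ)) (Fin r) ℝ)
    (A₁₂ : Matrix (Fin (r + ℓ)) (Fin (n - r)) ℝ)
    (A₂₁ : Matrix (Fin (m - (r + ℓ))) (Fin r) ℝ)
    (A₂₂ : Matrix (Fin (m - (r + ℓ))) (Fin (n - r)) ℝ)
    (Abar : Matrix (Fin (r + ℓ) ⊕ Fin (m - (r + ℓ))) (Fin r ⊕ Fin (n - r)) ℝ)
    (hAbar : Abar = Matrix.fromBlocks A₁₁ A₁₂ A₂₁ A₂₂)
    (hrank : A₁₁.rank = r)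
    (X : Matrix (Fin r ⊕ Fin (n - r)) (Fin r) ℝ)
    (hX : X = Matrix.fromRows (1 : Matrix (Fin r) (Fin r) ℝ) 0)
    (Y : Matrix (Fin (r + ℓ) ⊕ Fin (m - (r + ℓ))) (Fin (r + ℓ)) ℝ)
    (hY : Y = Matrix.fromRows (1 : Matrix (Fin (r + ℓ)) (Fin (r + ℓ)) ℝ) 0) :
    Abar * X * pinv (Yᵀ * Abar * X) * (Yᵀ * Abar) =
      Matrix.fromBlocks A₁₁ (A₁₁ * pinv A₁₁ * A₁₂) A₂₁ (A₂₁ * pinv A₁₁ * A₁₂) := by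
  subst hAbar hX hY
  have hP : pinv A₁₁ * A₁₁ = 1 := pinv_mul_self_of_rank_eq_card (by rwa [Fintype.card_fin])
  rw [fromBlocks_mul_fromRows_one_zero, transpose_fromRows_one_zero_mul_fromBlocks,
    fromCols_mul_fromRows_one_zero, fromRows_mul_mul_fromCols_of_mul_eq_one _ _ _ hP]
end

section
/- Let A be an m×n real matrix, Ṽ ∈ ℝ^{n×r} and Ũ ∈ ℝ^{m×r} orthonormal (ℓ = 0) with orthogonal completions Q₁ = [Ũ, Ũ⊥], Q₂ = [Ṽ, Ṽ⊥], and set Ā = Q₁*AQ₂ with conformal blocks Ā₁₁ (r×r), Ā₁₂, Ā₂₁, Ā₂₂. If Ā₁₁ is invertible, then Q₁*(A − AṼ(Ũ*AṼ)†Ũ*A)Q₂ = [[0, 0],[0, Ā₂₂ − Ā₂₁Ā₁₁^{−1}Ā₁₂]]; i.e., without oversampling the generalized Nyström error, up to orthogonal transformations, is nonzero only in the (2,2) block, where it equals the Schur complement of Ā₁₁ in Ā. -/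
open Matrix

/-! Since `Ũ` and `Ṽ` are the leading column blocks of `Q₁` and `Q₂`, the sketches
`Q₁ᵀAṼ` and `ŨᵀAQ₂` are the first block column and block row of `Ā`, and the core matrix
`ŨᵀAṼ` is `Ā₁₁`, whose pseudoinverse is its inverse. The transformed error is then
`Ā - [Ā₁₁; Ā₂₁] Ā₁₁⁻¹ [Ā₁₁, Ā₁₂]`, which is block elimination on `Ā`: it leaves only the
Schur complement. -/

lemma pinv_eq_inv_of_isUnit {n : Type*} [Fintype n] [DecidableEq n] {A : Matrix n n ℝ}
    (hA : IsUnit A) : pinv A = A⁻¹ := by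
  have hdet : IsUnit A.det := (isUnit_iff_isUnit_det A).mp hA
  have hgram : (Aᵀ * A).det ≠ 0 := by
    rw [det_mul, det_transpose]
    exact mul_ne_zero hdet.ne_zero hdet.ne_zero
  -- The Tikhonov family is continuous at `ε = 0` since `AᵀA` is invertible there.
  have hcont : ContinuousAt (fun ε : ℝ => (Aᵀ * A + ε • 1)⁻¹ * Aᵀ) 0 := by
    refine ContinuousAt.mul ?_ continuousAt_const
    refine (continuousAt_matrix_inv _ ?_).comp (by fun_prop)
    rw [Ring.inverse_eq_inv']
    exact continuousAt_inv₀ (by simpa using hgram)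
  rw [pinv, (hcont.tendsto.mono_left nhdsWithin_le_nhds).limUnder_eq, zero_smul, add_zero,
    Matrix.mul_inv_rev, Matrix.mul_assoc, nonsing_inv_mul _ (by rwa [det_transpose]), Matrix.mul_one]

section Blocks

variable {R : Type*} [CommRing R] {m n r₁ r₂ s₁ s₂ : Type*} [Fintype m] [Fintype n]

lemma transpose_fromCols_mul_mul_fromCols (U : Matrix m r₁ R) (U' : Matrix m r₂ R)
    (A : Matrix m n R) (V : Matrix n s₁ R) (V' : Matrix n s₂ R) :
    (fromCols U U')ᵀ * A * fromCols V V' =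
      fromBlocks (Uᵀ * A * V) (Uᵀ * A * V') (U'ᵀ * A * V) (U'ᵀ * A * V') := by
  rw [transpose_fromCols, fromRows_mul, fromRows_mul_fromCols]

lemma transpose_fromCols_mul_nystrom_mul_fromCols [Fintype r₁] [Fintype s₁]
    (U : Matrix m r₁ R) (U' : Matrix m r₂ R) (A : Matrix m n R) (V : Matrix n s₁ R) (V' : Matrix n s₂ R) (X : Matrix s₁ r₁ R) :
    (fromCols U U')ᵀ * (A * V * X * (Uᵀ * A)) * fromCols V V' =
      fromRows (Uᵀ * A * V) (U'ᵀ * A * V) * X * fromCols (Uᵀ * A * V) (Uᵀ * A * V') := by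
  simp only [transpose_fromCols, fromRows_mul, mul_fromCols, Matrix.mul_assoc]

variable [Fintype r₁] [DecidableEq r₁]

lemma fromBlocks_sub_fromRows_mul_inv_mul_fromCols (A₁₁ : Matrix r₁ r₁ R)
    (A₁₂ : Matrix r₁ s₂ R) (A₂₁ : Matrix r₂ r₁ R) (A₂₂ : Matrix r₂ s₂ R) (h : IsUnit A₁₁.det) :
    fromBlocks A₁₁ A₁₂ A₂₁ A₂₂ - fromRows A₁₁ A₂₁ * A₁₁⁻¹ * fromCols A₁₁ A₁₂ =
      fromBlocks 0 0 0 (A₂₂ - A₂₁ * A₁₁⁻¹ * A₁₂) := by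
  rw [fromRows_mul, fromRows_mul_fromCols, mul_nonsing_inv _ h, Matrix.one_mul,
    Matrix.mul_assoc A₂₁, nonsing_inv_mul _ h, Matrix.mul_one, Matrix.one_mul]
  ext (i | i) (j | j) <;> simp

end Blocks

theorem generalized_nystrom_error_structure_no_oversampling_general
    (m n r : ℕ)
    (A : Matrix (Fin m) (Fin n) ℝ)
    (tV : Matrix (Fin n) (Fin r) ℝ) (tU : Matrix (Fin m) (Fin r) ℝ)
    (tVperp : Matrix (Fin n) (Fin (n - r)) ℝ)
    (tUperp : Matrix (Fin m) (Fin (m - r)) ℝ)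
    (Q₁ : Matrix (Fin m) (Fin r ⊕ Fin (m - r)) ℝ)
    (Q₂ : Matrix (Fin n) (Fin r ⊕ Fin (n - r)) ℝ)
    (hQ₁ : Q₁ = Matrix.fromCols tU tUperp)
    (hQ₂ : Q₂ = Matrix.fromCols tV tVperp)
    (Abar : Matrix (Fin r ⊕ Fin (m - r)) (Fin r ⊕ Fin (n - r)) ℝ)
    (hAbar : Abar = Q₁ᵀ * A * Q₂)
    (A₁₁ : Matrix (Fin r) (Fin r) ℝ) (hA₁₁ : A₁₁ = Abar.toBlocks₁₁)
    (A₁₂ : Matrix (Fin r) (Fin (n - r)) ℝ) (hA₁₂ : A₁₂ = Abar.toBlocks₁₂)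
    (A₂₁ : Matrix (Fin (m - r)) (Fin r) ℝ) (hA₂₁ : A₂₁ = Abar.toBlocks₂₁)
    (A₂₂ : Matrix (Fin (m - r)) (Fin (n - r)) ℝ) (hA₂₂ : A₂₂ = Abar.toBlocks₂₂)
    (hinv : IsUnit A₁₁) :
    Q₁ᵀ * (A - A * tV * pinv (tUᵀ * A * tV) * (tUᵀ * A)) * Q₂ =
      Matrix.fromBlocks 0 0 0 (A₂₂ - A₂₁ * A₁₁⁻¹ * A₁₂) := by
  subst hQ₁ hQ₂ hAbar
  simp only [transpose_fromCols_mul_mul_fromCols, toBlocks_fromBlocks₁₁, toBlocks_fromBlocks₁₂,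
    toBlocks_fromBlocks₂₁, toBlocks_fromBlocks₂₂] at hA₁₁ hA₁₂ hA₂₁ hA₂₂
  subst hA₁₁ hA₁₂ hA₂₁ hA₂₂
  rw [pinv_eq_inv_of_isUnit hinv, Matrix.mul_sub, Matrix.sub_mul,
    transpose_fromCols_mul_nystrom_mul_fromCols,
    transpose_fromCols_mul_mul_fromCols]
  exact fromBlocks_sub_fromRows_mul_inv_mul_fromCols _ _ _ _
    ((isUnit_iff_isUnit_det _).mp hinv)

/-- Without oversampling (`ℓ = 0`) and with `Ā₁₁` invertible, the generalized
Nyström error, up to orthogonal transformations, is nonzero only in the `(2,2)`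
block, where it equals the Schur complement `Ā₂₂ − Ā₂₁Ā₁₁⁻¹Ā₁₂`. -/
theorem generalized_nystrom_error_structure_no_oversampling
    (m n r : ℕ) (hrn : r ≤ n) (hrm : r ≤ m)
    (A : Matrix (Fin m) (Fin n) ℝ)
    (tV : Matrix (Fin n) (Fin r) ℝ) (tU : Matrix (Fin m) (Fin r) ℝ)
    (tVperp : Matrix (Fin n) (Fin (n - r)) ℝ)
    (tUperp : Matrix (Fin m) (Fin (m - r)) ℝ)
    (hV : tVᵀ * tV = 1) (hU : tUᵀ * tU = 1)
    (Q₁ : Matrix (Fin m) (Fin r ⊕ Fin (m - r)) ℝ)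
    (Q₂ : Matrix (Fin n) (Fin r ⊕ Fin (n - r)) ℝ)
    (hQ₁ : Q₁ = Matrix.fromCols tU tUperp)
    (hQ₂ : Q₂ = Matrix.fromCols tV tVperp)
    (hQ₁o : Q₁ᵀ * Q₁ = 1) (hQ₁o' : Q₁ * Q₁ᵀ = 1)
    (hQ₂o : Q₂ᵀ * Q₂ = 1) (hQ₂o' : Q₂ * Q₂ᵀ = 1)
    (Abar : Matrix (Fin r ⊕ Fin (m - r)) (Fin r ⊕ Fin (n - r)) ℝ)
    (hAbar : Abar = Q₁ᵀ * A * Q₂)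
    (A₁₁ : Matrix (Fin r) (Fin r) ℝ) (hA₁₁ : A₁₁ = Abar.toBlocks₁₁)
    (A₁₂ : Matrix (Fin r) (Fin (n - r)) ℝ) (hA₁₂ : A₁₂ = Abar.toBlocks₁₂)
    (A₂₁ : Matrix (Fin (m - r)) (Fin r) ℝ) (hA₂₁ : A₂₁ = Abar.toBlocks₂₁)
    (A₂₂ : Matrix (Fin (m - r)) (Fin (n - r)) ℝ) (hA₂₂ : A₂₂ = Abar.toBlocks₂₂)
    (hinv : IsUnit A₁₁) :
    Q₁ᵀ * (A - A * tV * pinv (tUᵀ * A * tV) * (tUᵀ * A)) * Q₂ =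
      Matrix.fromBlocks 0 0 0 (A₂₂ - A₂₁ * A₁₁⁻¹ * A₁₂) :=
  generalized_nystrom_error_structure_no_oversampling_general m n r A tV tU tVperp tUperp Q₁ Q₂ hQ₁
    hQ₂ Abar hAbar A₁₁ hA₁₁ A₁₂ hA₁₂ A₂₁ hA₂₁ A₂₂ hA₂₂ hinv
end
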